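/- In a binary phylogenetic network, the number of cherry covers equals the number of support trees. In particular, if N is a binary tree-based network, the map sending a cherry cover to the subgraph obtained by deleting all middle arcs of its reticulated cherry shapes is a bijection onto the set of support trees of N. -/
import Mathlib


open Classical

structure MGraph (V A : Type) where
  tail : A → V
  head : A → V

namespace MGraph

variable {V A : Type} [Fintype V] [Fintype A] [DecidableEq V] [DecidableEq A]

variable (D : MGraph V A)

def indeg (v : V) : ℕ := Fintype.card {a : A // D.head a = v}
def outdeg (v : V) : ℕ := Fintype.card {a : A // D.tail a = v}

def IsRoot (v : V) : Prop := D.indeg v = 0 ∧ D.outdeg v = 1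
def IsLeaf (v : V) : Prop := D.indeg v = 1 ∧ D.outdeg v = 0
def IsTreeNode (v : V) : Prop := D.indeg v = 1 ∧ 2 ≤ D.outdeg v
def IsRetic (v : V) : Prop := 2 ≤ D.indeg v ∧ D.outdeg v = 1

def Acyclic : Prop := ∃ rank : V → ℕ, ∀ a : A, rank (D.tail a) < rank (D.head a)
def NoParallel : Prop := ∀ a b : A, D.tail a = D.tail b → D.head a = D.head b → a = b
def IsRootArc (e : A) : Prop := D.IsRoot (D.tail e)

/-- (non-binary) phylogenetic network -/
def IsPhylo : Prop :=
  D.Acyclic ∧ D.NoParallel ∧ (∃! v : V, D.IsRoot v) ∧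
    ∀ v : V, D.IsRoot v ∨ D.IsLeaf v ∨ D.IsTreeNode v ∨ D.IsRetic v

def IsSemiBinary : Prop := D.IsPhylo ∧ ∀ v : V, D.IsTreeNode v → D.outdeg v = 2
def IsBinary : Prop := D.IsSemiBinary ∧ ∀ v : V, D.IsRetic v → D.indeg v = 2

/-- A support tree: keep all non-reticulation arcs, exactly one incoming arc per
reticulation, and create no new leaves. -/
def IsSupportTree (S : Set A) : Prop :=
  (∀ a : A, ¬ D.IsRetic (D.head a) → a ∈ S) ∧
  (∀ v : V, D.IsRetic v → ∃! a : A, a ∈ S ∧ D.head a = v) ∧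
  (∀ v : V, ¬ D.IsLeaf v → ∃ a ∈ S, D.tail a = v)

def IsTreeBased : Prop := ∃ S : Set A, D.IsSupportTree S

def IsTreeChild : Prop :=
  ∀ v : V, ¬ D.IsLeaf v → ∃ e : A, D.tail e = v ∧ (D.IsTreeNode (D.head e) ∨ D.IsLeaf (D.head e))

/-- A cherry shape: two arcs with common tail and distinct heads. -/
def IsCherryShape (s : Finset A) : Prop :=
  ∃ a b : A, a ≠ b ∧ s = {a, b} ∧ D.tail a = D.tail b ∧ D.head a ≠ D.head b

/-- A reticulated cherry shape with designated middle arc `mid`; node-type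
predicates `tn` (tree node) and `rt` (reticulation) are parameters so that the
definition also applies to the bulged version of a network. -/
def IsRCShapeMid (tn rt : V → Prop) (s : Finset A) (mid : A) : Prop :=
  ∃ bot top : A, bot ≠ mid ∧ bot ≠ top ∧ mid ≠ top ∧ s = {bot, mid, top} ∧
    D.head mid = D.tail bot ∧ D.tail mid = D.tail top ∧ rt (D.tail bot) ∧ tn (D.tail mid)

def IsRCShape (tn rt : V → Prop) (s : Finset A) : Prop := ∃ mid : A, D.IsRCShapeMid tn rt s mid

/-- A cherry cover: every arc except root arcs lies in exactly one shape. -/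
def IsCherryCoverG (tn rt : V → Prop) (isRoot : A → Prop) (P : Finset (Finset A)) : Prop :=
  (∀ s ∈ P, D.IsCherryShape s ∨ D.IsRCShape tn rt s) ∧
  (∀ e : A, ¬ isRoot e → ∃! s : Finset A, s ∈ P ∧ e ∈ s) ∧
  (∀ s ∈ P, ∀ e ∈ s, ¬ isRoot e)

def IsCherryCover (P : Finset (Finset A)) : Prop :=
  D.IsCherryCoverG D.IsTreeNode D.IsRetic D.IsRootArc P

/-- `Q` covers exactly the arc set `T` with cherry and reticulated cherry shapes. -/
def CoversExactly (tn rt : V → Prop) (T : Set A) (Q : Finset (Finset A)) : Prop :=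
  (∀ s ∈ Q, D.IsCherryShape s ∨ D.IsRCShape tn rt s) ∧
  (∀ s ∈ Q, ∀ e ∈ s, e ∈ T) ∧ (∀ e ∈ T, ∃! s : Finset A, s ∈ Q ∧ e ∈ s)

/-- `Q` covers exactly the arc set `T` using only reticulated cherry shapes. -/
def CoversExactlyRC (tn rt : V → Prop) (T : Set A) (Q : Finset (Finset A)) : Prop :=
  (∀ s ∈ Q, D.IsRCShape tn rt s) ∧
  (∀ s ∈ Q, ∀ e ∈ s, e ∈ T) ∧ (∀ e ∈ T, ∃! s : Finset A, s ∈ Q ∧ e ∈ s)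

/-- Multiplicity of an arc in the bulged version. -/
noncomputable def bulgeMult (a : A) : ℕ :=
  if D.IsRetic (D.tail a) then D.indeg (D.tail a) - 1 else 1

/-- Arcs of the bulged version `B(N)`. -/
abbrev BArc : Type := Σ a : A, Fin (D.bulgeMult a)

def Bulged : MGraph V D.BArc := ⟨fun p => D.tail p.1, fun p => D.head p.1⟩

/-- A cherry cover of the bulged version, with node types taken from `N`. -/
def IsBulgedCherryCover (P : Finset (Finset D.BArc)) : Prop :=
  D.Bulged.IsCherryCoverG (fun v => D.IsTreeNode v) (fun v => D.IsRetic v)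
    (fun e => D.IsRootArc e.1) P

/-- Isomorphism class of a bulged cherry cover: forget which parallel copy is used. -/
noncomputable def coverClass (P : Finset (Finset D.BArc)) : Multiset (Finset A) :=
  P.val.map (fun s => s.image (fun e => e.1))

/-- Zig-zag trail: a nonempty sequence of distinct arcs alternately sharing heads
and tails. -/
def IsZZ (l : List A) : Prop :=
  l ≠ [] ∧ l.Nodup ∧
    (((∀ (i : ℕ) (x y : A), l[2*i]? = some x → l[2*i+1]? = some y → D.head x = D.head y) ∧
      (∀ (i : ℕ) (x y : A), l[2*i+1]? = some x → l[2*i+2]? = some y → D.tail x = D.tail y)) ∨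
     ((∀ (i : ℕ) (x y : A), l[2*i]? = some x → l[2*i+1]? = some y → D.tail x = D.tail y) ∧
      (∀ (i : ℕ) (x y : A), l[2*i+1]? = some x → l[2*i+2]? = some y → D.head x = D.head y)))

/-- Maximal zig-zag trail: not properly contained in another zig-zag trail. -/
def IsMaxZZ (l : List A) : Prop := D.IsZZ l ∧ ∀ l' : List A, D.IsZZ l' → l.Sublist l' → l' = l

/-- A fence decomposition, as a partition of the non-root arcs into arc sets of
maximal zig-zag trails. -/
def IsFenceDecomp (P : Set (Set A)) : Prop :=
  (∀ s ∈ P, ∃ l : List A, D.IsMaxZZ l ∧ {e : A | e ∈ l} = s) ∧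
  (∀ s ∈ P, ∀ t ∈ P, s ≠ t → Disjoint s t) ∧
  ⋃₀ P = {e : A | ¬ D.IsRootArc e}

/-- W-fence (binary definition). -/
def IsWFence (l : List A) : Prop :=
  D.IsMaxZZ l ∧ 2 ≤ l.length ∧ Even l.length ∧
  (∀ x, l.head? = some x → D.IsRetic (D.tail x)) ∧
  (∀ y, l.getLast? = some y → D.IsRetic (D.tail y))

/-- A (not necessarily maximal) crown: a closed zig-zag trail of even length ≥ 4. -/
def IsCrownCycle (l : List A) : Prop :=
  D.IsZZ l ∧ 4 ≤ l.length ∧ Even l.length ∧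
  ∀ x y, l.head? = some x → l.getLast? = some y → (D.head x = D.head y ∨ D.tail x = D.tail y)

def IsCrownTrail (l : List A) : Prop := D.IsMaxZZ l ∧ D.IsCrownCycle l

def ContainsCrown (l : List A) : Prop := ∃ m : List A, D.IsCrownCycle m ∧ m.IsInfix l

/-- M-fence: maximal zig-zag trail of even length, not a crown, all tails tree nodes. -/
def IsMFence (l : List A) : Prop :=
  D.IsMaxZZ l ∧ Even l.length ∧ ¬ D.IsCrownTrail l ∧ ∀ e ∈ l, D.IsTreeNode (D.tail e)

/-- W-fence (crown-free version, for non-binary networks). -/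
def IsWFenceNC (l : List A) : Prop :=
  D.IsMaxZZ l ∧ Even l.length ∧ ¬ D.ContainsCrown l ∧
  (∀ x, l.head? = some x → D.IsRetic (D.tail x)) ∧
  (∀ y, l.getLast? = some y → D.IsRetic (D.tail y))

/-- Lower W-crown. -/
def IsLowerWCrown (l : List A) : Prop :=
  D.IsZZ l ∧ ∃ p cr : List A, l = p ++ cr ∧ Odd p.length ∧ ¬ D.ContainsCrown p ∧
    D.IsCrownCycle cr ∧
    (∀ x y, p.getLast? = some x → cr.head? = some y → D.head x = D.head y) ∧
    (∀ x, p.head? = some x → D.IsRetic (D.tail x))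

/-- Double-crown: two crowns joined by a crown-free trail. -/
def IsDoubleCrown (l : List A) : Prop :=
  D.IsZZ l ∧ ∃ p q r : List A, l = p ++ q ++ r ∧ D.IsCrownCycle p ∧ D.IsCrownCycle r ∧
    ¬ D.ContainsCrown q

def ArcsOf (F : Set (List A)) : Set A := {e : A | ∃ l ∈ F, e ∈ l}

def Intersects (l1 l2 : List A) : Prop := ∃ e : A, e ∈ l1 ∧ e ∈ l2

/-- Extended zig-zag trail: a set of maximal zig-zag trails chain-connected by
pairwise intersection. -/
def IsExtZZ (F : Set (List A)) : Prop :=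
  F.Nonempty ∧ (∀ l ∈ F, D.IsMaxZZ l) ∧
  ∀ l1 ∈ F, ∀ l2 ∈ F,
    Relation.ReflTransGen (fun x y : List A => x ∈ F ∧ y ∈ F ∧ Intersects x y) l1 l2

def IsMaxExtZZ (F : Set (List A)) : Prop :=
  D.IsExtZZ F ∧ ∀ G : Set (List A), D.IsExtZZ G → F ⊆ G → G = F

def VertsOf (F : Set (List A)) : Set V :=
  {w : V | ∃ e ∈ ArcsOf F, D.tail e = w ∨ D.head e = w}

/-- The free endpoint of an extremal arc of a trail. -/
noncomputable def frontEnd (x : A) : V := if D.IsRetic (D.tail x) then D.tail x else D.head x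

/-- Endpoints of a zig-zag trail. -/
def EndsSet (l : List A) : Set V :=
  {w : V | (∃ x, l.head? = some x ∧ w = D.frontEnd x) ∨ (∃ y, l.getLast? = some y ∧ w = D.frontEnd y)}

/-- `s` is the arc set of a crown contained in (the arcs of) `F`. -/
def CrownIn (F : Set (List A)) (s : Set A) : Prop :=
  ∃ m : List A, D.IsCrownCycle m ∧ {e : A | e ∈ m} = s ∧ s ⊆ ArcsOf F

/-- Endpoints of an extended zig-zag trail (from its non-crown constituents). -/
def EndSetF (F : Set (List A)) : Set V :=
  {w : V | ∃ l ∈ F, ¬ D.ContainsCrown l ∧ w ∈ D.EndsSet l}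

def NoCrownsIn (F : Set (List A)) : Prop := ¬ ∃ s : Set A, D.CrownIn F s

def IsGenNFence (F : Set (List A)) : Prop :=
  D.IsMaxExtZZ F ∧ D.NoCrownsIn F ∧ ∃! u : V, u ∈ D.EndSetF F ∧ D.IsRetic u

def IsGenMFence (F : Set (List A)) : Prop :=
  D.IsMaxExtZZ F ∧ D.NoCrownsIn F ∧ ∀ w ∈ D.EndSetF F, D.IsTreeNode w

def IsGenCrown (F : Set (List A)) : Prop :=
  D.IsMaxExtZZ F ∧ (∃! s : Set A, D.CrownIn F s) ∧ ∀ w ∈ D.EndSetF F, D.IsTreeNode w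

end MGraph
namespace MGraph
set_option linter.unusedSectionVars false

variable {V A : Type} [Fintype V] [Fintype A] [DecidableEq V] [DecidableEq A] {D : MGraph V A}

lemma card_le_one_eq {f : A → V} {v : V} (h : Fintype.card {a : A // f a = v} ≤ 1)
    {a b : A} (ha : f a = v) (hb : f b = v) : a = b :=
  congrArg Subtype.val (Fintype.card_le_one_iff.mp h ⟨a, ha⟩ ⟨b, hb⟩)

lemma card_pos_exists {f : A → V} {v : V} (h : 1 ≤ Fintype.card {a : A // f a = v}) :
    ∃ a, f a = v := by
  obtain ⟨⟨a, ha⟩⟩ := Fintype.card_pos_iff.mp h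
  exact ⟨a, ha⟩

lemma card_two_other {f : A → V} {v : V} (h : Fintype.card {a : A // f a = v} = 2)
    {a : A} (ha : f a = v) : ∃ b, f b = v ∧ b ≠ a := by
  have h1 : 1 < Fintype.card {a : A // f a = v} := by omega
  obtain ⟨⟨b, hb⟩, hne⟩ := Fintype.exists_ne_of_one_lt_card h1 ⟨a, ha⟩
  exact ⟨b, hb, fun h' => hne (Subtype.ext h')⟩

lemma card_two_eq {f : A → V} {v : V} (h : Fintype.card {a : A // f a = v} = 2)
    {a b c : A} (ha : f a = v) (hb : f b = v) (hc : f c = v)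
    (hba : b ≠ a) (hca : c ≠ a) : b = c := by
  by_contra hbc
  have hle : ({⟨a, ha⟩, ⟨b, hb⟩, ⟨c, hc⟩} : Finset {x : A // f x = v}).card ≤ 2 := by
    rw [← h]
    exact Finset.card_le_univ _
  have h3 : ({⟨a, ha⟩, ⟨b, hb⟩, ⟨c, hc⟩} : Finset {x : A // f x = v}).card = 3 := by
    rw [Finset.card_insert_of_notMem (by simp [Subtype.ext_iff]; exact ⟨fun h' => hba h'.symm, fun h' => hca h'.symm⟩),
      Finset.card_insert_of_notMem (by simp [Subtype.ext_iff]; exact fun h' => hbc h'),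
      Finset.card_singleton]
  omega

/-! ### vertex type facts -/

lemma not_treeNode_of_retic {v : V} (h : D.IsRetic v) : ¬ D.IsTreeNode v :=
  fun h' => by have := h.1; have := h'.1; omega

lemma not_root_of_retic {v : V} (h : D.IsRetic v) : ¬ D.IsRoot v :=
  fun h' => by have := h.1; have := h'.1; omega

lemma not_root_of_treeNode {v : V} (h : D.IsTreeNode v) : ¬ D.IsRoot v :=
  fun h' => by have := h.1; have := h'.1; omega

lemma not_leaf_of_root {v : V} (h : D.IsRoot v) : ¬ D.IsLeaf v :=
  fun h' => by have := h.1; have := h'.1; omega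

lemma not_leaf_of_retic {v : V} (h : D.IsRetic v) : ¬ D.IsLeaf v :=
  fun h' => by have := h.2; have := h'.2; omega

lemma not_leaf_of_treeNode {v : V} (h : D.IsTreeNode v) : ¬ D.IsLeaf v :=
  fun h' => by have := h.2; have := h'.2; omega

lemma outdeg_pos_tail (a : A) : 1 ≤ D.outdeg (D.tail a) :=
  Fintype.card_pos_iff.mpr ⟨⟨a, rfl⟩⟩

lemma indeg_pos_head (a : A) : 1 ≤ D.indeg (D.head a) :=
  Fintype.card_pos_iff.mpr ⟨⟨a, rfl⟩⟩

/-! ### binary projections -/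

lemma bin_np (hbin : D.IsBinary) : D.NoParallel := hbin.1.1.2.1

lemma bin_class (hbin : D.IsBinary) (v : V) :
    D.IsRoot v ∨ D.IsLeaf v ∨ D.IsTreeNode v ∨ D.IsRetic v := hbin.1.1.2.2.2 v

lemma bin_tn_outdeg (hbin : D.IsBinary) {v : V} (h : D.IsTreeNode v) : D.outdeg v = 2 :=
  hbin.1.2 v h

lemma bin_rt_indeg (hbin : D.IsBinary) {v : V} (h : D.IsRetic v) : D.indeg v = 2 :=
  hbin.2 v h

/-- the tail of any arc is a root, tree node or reticulation -/
lemma tail_class (hbin : D.IsBinary) (a : A) :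
    D.IsRoot (D.tail a) ∨ D.IsTreeNode (D.tail a) ∨ D.IsRetic (D.tail a) := by
  rcases bin_class hbin (D.tail a) with h | h | h | h
  · exact Or.inl h
  · exact absurd (D.outdeg_pos_tail a) (by rw [h.2]; omega)
  · exact Or.inr (Or.inl h)
  · exact Or.inr (Or.inr h)

/-! ### choice functions -/

noncomputable def otherArc (a : A) : A :=
  if h : ∃ b, D.tail b = D.tail a ∧ b ≠ a then h.choose else a

lemma otherArc_spec {a : A} (h : D.outdeg (D.tail a) = 2) :
    D.tail (D.otherArc a) = D.tail a ∧ D.otherArc a ≠ a := by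
  have hex : ∃ b, D.tail b = D.tail a ∧ b ≠ a := card_two_other h rfl
  rw [otherArc, dif_pos hex]
  exact hex.choose_spec

lemma otherArc_eq {a b : A} (h : D.outdeg (D.tail a) = 2)
    (hb : D.tail b = D.tail a) (hba : b ≠ a) : b = D.otherArc a :=
  card_two_eq h rfl hb (D.otherArc_spec h).1 hba (D.otherArc_spec h).2

lemma otherArc_invol {a : A} (h : D.outdeg (D.tail a) = 2) :
    D.otherArc (D.otherArc a) = a := by
  have h' : D.outdeg (D.tail (D.otherArc a)) = 2 := by rw [(D.otherArc_spec h).1]; exact h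
  exact (D.otherArc_eq h' (D.otherArc_spec h).1.symm (fun he => (D.otherArc_spec h).2 he.symm)).symm

noncomputable def botArc (m : A) : A :=
  if h : ∃ b, D.tail b = D.head m then h.choose else m

lemma botArc_spec {m : A} (h : 1 ≤ D.outdeg (D.head m)) :
    D.tail (D.botArc m) = D.head m := by
  have hex : ∃ b, D.tail b = D.head m := card_pos_exists h
  rw [botArc, dif_pos hex]
  exact hex.choose_spec

lemma botArc_eq {m b : A} (h : D.outdeg (D.head m) = 1) (hb : D.tail b = D.head m) :
    b = D.botArc m :=
  card_le_one_eq (le_of_eq h) hb (D.botArc_spec (le_of_eq h.symm))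

noncomputable def rcOf (m : A) : Finset A := {D.botArc m, m, D.otherArc m}

noncomputable def chOf (e : A) : Finset A := {e, D.otherArc e}

/-! ### shape cardinalities -/

lemma rc_card {s : Finset A} {m : A}
    (h : D.IsRCShapeMid D.IsTreeNode D.IsRetic s m) : s.card = 3 := by
  obtain ⟨bot, top, h1, h2, h3, hs, _⟩ := h
  subst hs
  rw [Finset.card_insert_of_notMem (by simp [h1, h2]),
    Finset.card_insert_of_notMem (by simp [h3]), Finset.card_singleton]

lemma cherry_card {s : Finset A} (h : D.IsCherryShape s) : s.card = 2 := by
  obtain ⟨a, b, hab, hs, _⟩ := h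
  subst hs
  rw [Finset.card_insert_of_notMem (by simp [hab]), Finset.card_singleton]

/-! ### mid uniqueness and shape determination -/

lemma rc_mid_unique (hnp : D.NoParallel) {s : Finset A} {m e : A}
    (h1 : D.IsRCShapeMid D.IsTreeNode D.IsRetic s m)
    (h2 : D.IsRCShapeMid D.IsTreeNode D.IsRetic s e) : e = m := by
  obtain ⟨bot, top, hbm, hbt, hmt, hs, hhm, htm, hrb, htn⟩ := h1
  obtain ⟨bot', top', hbm', hbt', hmt', hs', hhm', htm', hrb', htn'⟩ := h2
  have he : e ∈ s := by rw [hs']; simp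
  rw [hs] at he
  simp only [Finset.mem_insert, Finset.mem_singleton] at he
  rcases he with he | he | he
  · -- e = bot : but tail e is a tree node while tail bot is a reticulation
    exact absurd htn' (he ▸ D.not_treeNode_of_retic hrb)
  · exact he
  · -- e = top
    have hb' : bot' ∈ s := by rw [hs']; simp
    rw [hs] at hb'
    simp only [Finset.mem_insert, Finset.mem_singleton] at hb'
    rcases hb' with hb' | hb' | hb'
    · -- bot' = bot : derive parallel arcs e and m
      refine hnp e m ?_ ?_
      · rw [he, ← htm]
      · rw [hhm', hb', ← hhm]
    · exact absurd htn (hb' ▸ D.not_treeNode_of_retic hrb')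
    · exact absurd (htm ▸ htn) (hb' ▸ D.not_treeNode_of_retic hrb')

lemma rc_mid_head_retic {s : Finset A} {m : A}
    (h : D.IsRCShapeMid D.IsTreeNode D.IsRetic s m) : D.IsRetic (D.head m) := by
  obtain ⟨bot, top, _, _, _, _, hhm, _, hrb, _⟩ := h
  rw [hhm]; exact hrb

lemma rc_mid_tail_tn {s : Finset A} {m : A}
    (h : D.IsRCShapeMid D.IsTreeNode D.IsRetic s m) : D.IsTreeNode (D.tail m) := by
  obtain ⟨bot, top, _, _, _, _, _, _, _, htn⟩ := h
  exact htn

lemma rc_mem_classify {s : Finset A} {m e : A}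
    (h : D.IsRCShapeMid D.IsTreeNode D.IsRetic s m) (he : e ∈ s) :
    D.tail e = D.head m ∨ e = m ∨ (D.tail e = D.tail m ∧ e ≠ m) := by
  obtain ⟨bot, top, hbm, hbt, hmt, hs, hhm, htm, hrb, htn⟩ := h
  rw [hs] at he
  simp only [Finset.mem_insert, Finset.mem_singleton] at he
  rcases he with he | he | he
  · exact Or.inl (he ▸ hhm.symm)
  · exact Or.inr (Or.inl he)
  · exact Or.inr (Or.inr ⟨he ▸ htm.symm, he ▸ (Ne.symm hmt)⟩)

/-- an RC shape with given mid is determined by the mid -/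
lemma rc_eq_of_mid (hbin : D.IsBinary) {s t : Finset A} {m : A}
    (h1 : D.IsRCShapeMid D.IsTreeNode D.IsRetic s m)
    (h2 : D.IsRCShapeMid D.IsTreeNode D.IsRetic t m) : s = t := by
  have hrt : D.IsRetic (D.head m) := D.rc_mid_head_retic h1
  have htn : D.IsTreeNode (D.tail m) := D.rc_mid_tail_tn h1
  have hod1 : D.outdeg (D.head m) = 1 := hrt.2
  have hod2 : D.outdeg (D.tail m) = 2 := bin_tn_outdeg hbin htn
  obtain ⟨bot, top, hbm, hbt, hmt, hs, hhm, htm, hrb, _⟩ := h1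
  obtain ⟨bot', top', hbm', hbt', hmt', hs', hhm', htm', hrb', _⟩ := h2
  have hb : bot = bot' := by
    rw [D.botArc_eq hod1 hhm.symm, D.botArc_eq hod1 hhm'.symm]
  have ht : top = top' := card_two_eq hod2 rfl htm.symm htm'.symm (Ne.symm hmt) (Ne.symm hmt')
  rw [hs, hs', hb, ht]

/-! ### cherry covers -/

def MidIn (P : Finset (Finset A)) (e : A) : Prop :=
  ∃ s ∈ P, D.IsRCShapeMid D.IsTreeNode D.IsRetic s e

lemma rc_mid_mem {s : Finset A} {m : A}
    (h : D.IsRCShapeMid D.IsTreeNode D.IsRetic s m) : m ∈ s := by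
  obtain ⟨bot, top, _, _, _, hs, _⟩ := h
  rw [hs]; simp

/-- every reticulation has an incoming middle arc -/
lemma cover_retic_mid (hP : D.IsCherryCover P) {v : V} (hv : D.IsRetic v) :
    ∃ m, D.MidIn P m ∧ D.head m = v := by
  obtain ⟨c, hc⟩ := card_pos_exists (f := D.tail) (le_of_eq hv.2.symm)
  have hcr : ¬ D.IsRootArc c := by
    intro h
    rw [IsRootArc, hc] at h
    exact D.not_root_of_retic hv h
  obtain ⟨s, ⟨hsP, hcs⟩, _⟩ := hP.2.1 c hcr
  rcases hP.1 s hsP with hch | ⟨m, hmid⟩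
  · obtain ⟨a, b, hab, hs, hta, hha⟩ := hch
    rw [hs] at hcs
    simp only [Finset.mem_insert, Finset.mem_singleton] at hcs
    have h1 : D.outdeg v ≤ 1 := le_of_eq hv.2
    rcases hcs with rfl | rfl
    · exact absurd (card_le_one_eq h1 (hta.symm.trans hc) hc) hab.symm
    · exact absurd (card_le_one_eq h1 (hta.trans hc) hc) hab
  · rcases D.rc_mem_classify hmid hcs with h | h | h
    · exact ⟨m, ⟨s, hsP, hmid⟩, h ▸ hc⟩
    · exact absurd (D.rc_mid_tail_tn hmid) (h ▸ hc ▸ D.not_treeNode_of_retic hv)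
    · exact absurd (D.rc_mid_tail_tn hmid) (h.1 ▸ hc ▸ D.not_treeNode_of_retic hv)

lemma rc_mid_bot {s : Finset A} {m : A}
    (h : D.IsRCShapeMid D.IsTreeNode D.IsRetic s m) : ∃ b ∈ s, D.tail b = D.head m := by
  obtain ⟨bot, top, _, _, _, hs, hhm, _⟩ := h
  exact ⟨bot, by rw [hs]; simp, hhm.symm⟩

lemma rc_mid_top {s : Finset A} {m : A}
    (h : D.IsRCShapeMid D.IsTreeNode D.IsRetic s m) : ∃ t ∈ s, D.tail t = D.tail m ∧ t ≠ m := by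
  obtain ⟨bot, top, _, _, hmt, hs, _, htm, _⟩ := h
  exact ⟨top, by rw [hs]; simp, htm.symm, Ne.symm hmt⟩

lemma cover_mid_head_inj (hbin : D.IsBinary) (hP : D.IsCherryCover P) {m1 m2 : A}
    (h1 : D.MidIn P m1) (h2 : D.MidIn P m2) (hh : D.head m1 = D.head m2) : m1 = m2 := by
  obtain ⟨s1, hs1, hm1⟩ := h1
  obtain ⟨s2, hs2, hm2⟩ := h2
  have hod1 : D.outdeg (D.head m1) ≤ 1 := le_of_eq (D.rc_mid_head_retic hm1).2
  obtain ⟨b1, hb1s, hb1⟩ := D.rc_mid_bot hm1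
  obtain ⟨b2, hb2s, hb2⟩ := D.rc_mid_bot hm2
  have hbb : b1 = b2 := card_le_one_eq hod1 hb1 (hb2.trans hh.symm)
  have hbmem2 : b1 ∈ s2 := hbb ▸ hb2s
  have hbr : ¬ D.IsRootArc b1 := hP.2.2 s1 hs1 b1 hb1s
  obtain ⟨u, _, huniq⟩ := hP.2.1 b1 hbr
  have hse : s1 = s2 := (huniq s1 ⟨hs1, hb1s⟩).trans (huniq s2 ⟨hs2, hbmem2⟩).symm
  exact (D.rc_mid_unique (bin_np hbin) hm1 (by rw [hse]; exact hm2)).symm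

lemma cover_mid_tail_inj (hbin : D.IsBinary) (hP : D.IsCherryCover P) {m1 m2 : A}
    (h1 : D.MidIn P m1) (h2 : D.MidIn P m2) (ht : D.tail m1 = D.tail m2) : m1 = m2 := by
  by_contra hne
  obtain ⟨s1, hs1, hm1⟩ := h1
  obtain ⟨s2, hs2, hm2⟩ := h2
  have hod2 : D.outdeg (D.tail m1) = 2 := bin_tn_outdeg hbin (D.rc_mid_tail_tn hm1)
  obtain ⟨top, htops, htopt, htopm⟩ := D.rc_mid_top hm1
  have htop : top = m2 := card_two_eq hod2 rfl htopt ht.symm htopm (Ne.symm hne)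
  have hmem1 : m2 ∈ s1 := htop ▸ htops
  have hmem2 : m2 ∈ s2 := D.rc_mid_mem hm2
  have hmr : ¬ D.IsRootArc m2 := hP.2.2 s2 hs2 m2 hmem2
  obtain ⟨u, _, huniq⟩ := hP.2.1 m2 hmr
  have hse : s1 = s2 := (huniq s1 ⟨hs1, hmem1⟩).trans (huniq s2 ⟨hs2, hmem2⟩).symm
  exact hne (D.rc_mid_unique (bin_np hbin) hm1 (by rw [hse]; exact hm2)).symm

/-- a middle arc never lies in a cherry shape of the cover -/
lemma cover_mid_not_cherry (hP : D.IsCherryCover P) {s : Finset A} {e : A}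
    (hs : s ∈ P) (hch : D.IsCherryShape s) (hes : e ∈ s) : ¬ D.MidIn P e := by
  rintro ⟨t, htP, hmid⟩
  have her : ¬ D.IsRootArc e := hP.2.2 s hs e hes
  obtain ⟨u, _, huniq⟩ := hP.2.1 e her
  have hst : s = t := (huniq s ⟨hs, hes⟩).trans (huniq t ⟨htP, D.rc_mid_mem hmid⟩).symm
  have h2 := D.cherry_card hch
  have h3 := D.rc_card hmid
  rw [hst] at h2
  omega

/-- MapsTo: deleting middle arcs of a cherry cover gives a support tree -/
theorem cover_maps (hbin : D.IsBinary) {P : Finset (Finset A)} (hP : D.IsCherryCover P) :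
    D.IsSupportTree {e : A | ¬ D.MidIn P e} := by
  refine ⟨?_, ?_, ?_⟩
  · -- arcs with non-reticulate head
    intro a ha hmid
    obtain ⟨s, _, h⟩ := hmid
    exact ha (D.rc_mid_head_retic h)
  · -- exactly one incoming arc per reticulation
    intro v hv
    have hind : D.indeg v = 2 := bin_rt_indeg hbin hv
    obtain ⟨m, hmid, hmv⟩ := D.cover_retic_mid hP hv
    obtain ⟨b, hbv, hbm⟩ := card_two_other (f := D.head) hind hmv
    refine ⟨b, ⟨?_, hbv⟩, ?_⟩
    · intro hmidb
      exact hbm (D.cover_mid_head_inj hbin hP hmidb hmid (by rw [hbv, hmv]))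
    · rintro c ⟨hcS, hcv⟩
      have hcm : c ≠ m := fun h => hcS (by rw [h]; exact hmid)
      exact card_two_eq hind hmv hcv hbv hcm hbm
  · -- no new leaves
    intro v hv
    rcases bin_class hbin v with hr | hl | ht | hrt
    · obtain ⟨r, hrv⟩ := card_pos_exists (f := D.tail) (le_of_eq hr.2.symm)
      refine ⟨r, ?_, hrv⟩
      intro hmid
      obtain ⟨s, _, h⟩ := hmid
      have htn := D.rc_mid_tail_tn h
      rw [hrv] at htn
      exact D.not_root_of_treeNode htn hr
    · exact absurd hl hv
    · have hod := bin_tn_outdeg hbin ht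
      obtain ⟨a, hav⟩ := card_pos_exists (f := D.tail) (v := v)
        (by simp only [outdeg] at hod; omega)
      by_cases hma : D.MidIn P a
      · obtain ⟨s, hsP, hmid⟩ := hma
        obtain ⟨t, hts, htt, htm⟩ := D.rc_mid_top hmid
        refine ⟨t, ?_, htt.trans hav⟩
        intro hmt
        exact htm (D.cover_mid_tail_inj hbin hP hmt ⟨s, hsP, hmid⟩ htt)
      · exact ⟨a, hma, hav⟩
    · obtain ⟨c, hcv⟩ := card_pos_exists (f := D.tail) (le_of_eq hrt.2.symm)
      refine ⟨c, ?_, hcv⟩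
      intro hmid
      obtain ⟨s, _, h⟩ := hmid
      have htn := D.rc_mid_tail_tn h
      rw [hcv] at htn
      exact D.not_treeNode_of_retic hrt htn

/-- InjOn: a cherry cover is determined by its set of middle arcs -/
lemma cover_subset (hbin : D.IsBinary) {P1 P2 : Finset (Finset A)}
    (h1 : D.IsCherryCover P1) (h2 : D.IsCherryCover P2)
    (hmid : ∀ e, D.MidIn P1 e ↔ D.MidIn P2 e) : P1 ⊆ P2 := by
  intro s hs
  rcases h1.1 s hs with hch | ⟨m, hm⟩
  · -- cherry shape
    obtain ⟨a, b, hab, hsab, hta, hha⟩ := hch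
    have has : a ∈ s := by rw [hsab]; simp
    have hbs : b ∈ s := by rw [hsab]; simp
    have hna : ¬ D.MidIn P1 a :=
      D.cover_mid_not_cherry h1 hs ⟨a, b, hab, hsab, hta, hha⟩ has
    have hna2 : ¬ D.MidIn P2 a := fun h => hna ((hmid a).mpr h)
    have har : ¬ D.IsRootArc a := h1.2.2 s hs a has
    have htn : D.IsTreeNode (D.tail a) := by
      rcases tail_class hbin a with h | h | h
      · exact absurd h har
      · exact h
      · exact absurd (card_le_one_eq (le_of_eq h.2) hta.symm rfl) hab.symm
    have hod : D.outdeg (D.tail a) = 2 := bin_tn_outdeg hbin htn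
    obtain ⟨s2, ⟨hs2P, has2⟩, _⟩ := h2.2.1 a har
    suffices hss : s = s2 by rw [hss]; exact hs2P
    rcases h2.1 s2 hs2P with hch2 | ⟨m2, hm2⟩
    · obtain ⟨a2, b2, hab2, hs2e, hta2, hha2⟩ := hch2
      rw [hs2e] at has2
      simp only [Finset.mem_insert, Finset.mem_singleton] at has2
      rcases has2 with rfl | rfl
      · have hob : b2 = b := card_two_eq hod rfl hta2.symm hta.symm hab2.symm hab.symm
        rw [hsab, hs2e, hob]
      · have hob : a2 = b :=
          card_two_eq hod rfl hta2 hta.symm hab2 hab.symm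
        rw [hsab, hs2e, hob, Finset.pair_comm]
    · rcases D.rc_mem_classify hm2 has2 with hcase | hcase | hcase
      · have hr := D.rc_mid_head_retic hm2
        rw [← hcase] at hr
        exact absurd htn (D.not_treeNode_of_retic hr)
      · exact absurd (by rw [hcase]; exact ⟨s2, hs2P, hm2⟩ : D.MidIn P2 a) hna2
      · obtain ⟨hcase1, hcase2⟩ := hcase
        have hmb : m2 = b :=
          card_two_eq hod rfl hcase1.symm hta.symm (Ne.symm hcase2) hab.symm
        obtain ⟨s1', hs1'P, hm2'⟩ := (hmid m2).mpr ⟨s2, hs2P, hm2⟩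
        have hbmem : b ∈ s1' := by rw [← hmb]; exact D.rc_mid_mem hm2'
        have hbr : ¬ D.IsRootArc b := h1.2.2 s hs b hbs
        obtain ⟨u, _, huniq⟩ := h1.2.1 b hbr
        have hse : s = s1' := (huniq s ⟨hs, hbs⟩).trans (huniq s1' ⟨hs1'P, hbmem⟩).symm
        have hc2 : s.card = 2 := D.cherry_card ⟨a, b, hab, hsab, hta, hha⟩
        have hc3 : s1'.card = 3 := D.rc_card hm2'
        rw [hse] at hc2
        omega
  · -- RC shape
    obtain ⟨s2, hs2P, hm2'⟩ := (hmid m).mp ⟨s, hs, hm⟩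
    have : s = s2 := D.rc_eq_of_mid hbin hm hm2'
    rw [this]
    exact hs2P

/-- SurjOn: every support tree arises from a cherry cover -/
theorem support_cover (hbin : D.IsBinary) {S : Set A} (hS : D.IsSupportTree S) :
    ∃ P : Finset (Finset A), D.IsCherryCover P ∧ (∀ e, D.MidIn P e ↔ e ∉ S) := by
  classical
  have hnp := bin_np hbin
  have hroot_mem : ∀ e : A, D.IsRootArc e → e ∈ S := by
    intro e he
    obtain ⟨r, hrS, hrt⟩ := hS.2.2 (D.tail e) (D.not_leaf_of_root he)
    have : r = e := card_le_one_eq (le_of_eq he.2) hrt rfl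
    rwa [← this]
  have hretic_out : ∀ e : A, D.IsRetic (D.tail e) → e ∈ S := by
    intro e he
    obtain ⟨r, hrS, hrt⟩ := hS.2.2 (D.tail e) (D.not_leaf_of_retic he)
    have : r = e := card_le_one_eq (le_of_eq he.2) hrt rfl
    rwa [← this]
  have hhead : ∀ m : A, m ∉ S → D.IsRetic (D.head m) := by
    intro m hm
    by_contra h
    exact hm (hS.1 m h)
  have htail : ∀ m : A, m ∉ S → D.IsTreeNode (D.tail m) := by
    intro m hm
    rcases tail_class hbin m with h | h | h
    · exact absurd (hroot_mem m h) hm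
    · exact h
    · exact absurd (hretic_out m h) hm
  have htail_inj : ∀ m1 m2 : A, m1 ∉ S → m2 ∉ S → D.tail m1 = D.tail m2 → m1 = m2 := by
    intro m1 m2 h1 h2 ht
    have htn := htail m1 h1
    have hod : D.outdeg (D.tail m1) = 2 := bin_tn_outdeg hbin htn
    obtain ⟨r, hrS, hrt⟩ := hS.2.2 (D.tail m1) (D.not_leaf_of_treeNode htn)
    exact card_two_eq hod hrt rfl ht.symm (fun h => h1 (by rw [h]; exact hrS))
      (fun h => h2 (by rw [h]; exact hrS))
  have hretic_in : ∀ v : V, D.IsRetic v → ∃ m, m ∉ S ∧ D.head m = v ∧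
      ∀ c, c ∉ S → D.head c = v → c = m := by
    intro v hv
    have hind : D.indeg v = 2 := bin_rt_indeg hbin hv
    obtain ⟨a, ⟨haS, hav⟩, hauniq⟩ := hS.2.1 v hv
    obtain ⟨b, hbv, hba⟩ := card_two_other (f := D.head) hind hav
    have hbS : b ∉ S := fun hmem => hba (hauniq b ⟨hmem, hbv⟩)
    exact ⟨b, hbS, hbv, fun c hc hcv =>
      card_two_eq hind hav hcv hbv (fun hh => hc (by rw [hh]; exact haS)) hba⟩
  have hbot_spec : ∀ m : A, m ∉ S → D.tail (D.botArc m) = D.head m := fun m hm =>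
    D.botArc_spec (le_of_eq (hhead m hm).2.symm)
  have hodt : ∀ m : A, m ∉ S → D.outdeg (D.tail m) = 2 := fun m hm =>
    bin_tn_outdeg hbin (htail m hm)
  have hshape : ∀ m : A, m ∉ S → D.IsRCShapeMid D.IsTreeNode D.IsRetic (D.rcOf m) m := by
    intro m hm
    have h1 := hbot_spec m hm
    have h2 := D.otherArc_spec (hodt m hm)
    refine ⟨D.botArc m, D.otherArc m, ?_, ?_, Ne.symm h2.2, rfl, h1.symm, h2.1.symm,
      ?_, htail m hm⟩
    · intro h
      have h4 : D.tail m = D.head m := by rw [← h1, h]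
      have h5 := hhead m hm
      rw [← h4] at h5
      exact D.not_treeNode_of_retic h5 (htail m hm)
    · intro h
      rw [h] at h1
      have h4 : D.head m = D.tail m := h1.symm.trans h2.1
      have h5 := hhead m hm
      rw [h4] at h5
      exact D.not_treeNode_of_retic h5 (htail m hm)
    · rw [h1]; exact hhead m hm
  obtain ⟨P, hPdef⟩ : ∃ P : Finset (Finset A),
      P = (Finset.univ.filter (fun a : A => a ∉ S)).image D.rcOf ∪
        (Finset.univ.filter
          (fun e : A => D.IsTreeNode (D.tail e) ∧ e ∈ S ∧ D.otherArc e ∈ S)).image D.chOf :=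
    ⟨_, rfl⟩
  have hPmem : ∀ s : Finset A, s ∈ P ↔ ((∃ m, m ∉ S ∧ D.rcOf m = s) ∨
      (∃ f, (D.IsTreeNode (D.tail f) ∧ f ∈ S ∧ D.otherArc f ∈ S) ∧ D.chOf f = s)) := by
    intro s
    rw [hPdef]
    simp only [Finset.mem_union, Finset.mem_image, Finset.mem_filter, Finset.mem_univ, true_and]
  have hrcmem : ∀ m e : A, e ∈ D.rcOf m ↔ e = D.botArc m ∨ e = m ∨ e = D.otherArc m := by
    intro m e; simp [rcOf]
  have hchmem : ∀ f e : A, e ∈ D.chOf f ↔ e = f ∨ e = D.otherArc f := by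
    intro f e; simp [chOf]
  have hshapes : ∀ s ∈ P, D.IsCherryShape s ∨ D.IsRCShape D.IsTreeNode D.IsRetic s := by
    intro s hsP
    rcases (hPmem s).mp hsP with ⟨m, hm, heq⟩ | ⟨f, ⟨hf1, hf2, hf3⟩, heq⟩
    · exact Or.inr ⟨m, heq ▸ hshape m hm⟩
    · left
      have h2 := D.otherArc_spec (bin_tn_outdeg hbin hf1)
      refine ⟨f, D.otherArc f, Ne.symm h2.2, heq.symm, h2.1.symm, ?_⟩
      intro hh
      exact h2.2 (hnp (D.otherArc f) f h2.1 hh.symm)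
  have hnoroot : ∀ s ∈ P, ∀ e ∈ s, ¬ D.IsRootArc e := by
    intro s hsP e hes
    rcases (hPmem s).mp hsP with ⟨m, hm, heq⟩ | ⟨f, ⟨hf1, hf2, hf3⟩, heq⟩
    · rw [← heq] at hes
      rcases (hrcmem m e).mp hes with h1 | h1 | h1
      · intro hr
        have h5 := hhead m hm
        rw [← hbot_spec m hm, ← h1] at h5
        exact D.not_root_of_retic h5 hr
      · exact fun hr => D.not_root_of_treeNode (by rw [h1]; exact htail m hm) hr
      · intro hr
        have hsp := D.otherArc_spec (hodt m hm)
        have h5 : D.tail e = D.tail m := by rw [h1, hsp.1]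
        exact D.not_root_of_treeNode (by rw [h5]; exact htail m hm) hr
    · rw [← heq] at hes
      rcases (hchmem f e).mp hes with h1 | h1
      · exact fun hr => D.not_root_of_treeNode (by rw [h1]; exact hf1) hr
      · intro hr
        have h2 := D.otherArc_spec (bin_tn_outdeg hbin hf1)
        have h5 : D.tail e = D.tail f := by rw [h1, h2.1]
        exact D.not_root_of_treeNode (by rw [h5]; exact hf1) hr
  have hcov : ∀ e : A, ¬ D.IsRootArc e → ∃! s : Finset A, s ∈ P ∧ e ∈ s := by
    intro e her
    rcases tail_class hbin e with h | h | h
    · exact absurd h her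
    · -- tree-node tail
      have hod : D.outdeg (D.tail e) = 2 := bin_tn_outdeg hbin h
      by_cases heS : e ∈ S
      · by_cases hoS : D.otherArc e ∈ S
        · -- cherry case
          refine ⟨D.chOf e, ⟨(hPmem _).mpr (Or.inr ⟨e, ⟨h, heS, hoS⟩, rfl⟩),
            (hchmem e e).mpr (Or.inl rfl)⟩, ?_⟩
          rintro s' ⟨hs'P, hes'⟩
          rcases (hPmem s').mp hs'P with ⟨m, hm, heq⟩ | ⟨f, ⟨hf1, hf2, hf3⟩, heq⟩
          · rw [← heq] at hes'
            rcases (hrcmem m e).mp hes' with h1 | h1 | h1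
            · have h5 := hhead m hm
              rw [← hbot_spec m hm, ← h1] at h5
              exact absurd h (D.not_treeNode_of_retic h5)
            · exact absurd (by rw [← h1]; exact heS) hm
            · have hsp := D.otherArc_spec (hodt m hm)
              have htme : D.tail m = D.tail e := by rw [show e = D.otherArc m from h1, hsp.1]
              have hmne : m ≠ e := fun hh => hm (by rw [hh]; exact heS)
              have hmo : m = D.otherArc e := D.otherArc_eq hod htme hmne
              exact absurd (by rw [hmo]; exact hoS) hm
          · rw [← heq] at hes'
            rcases (hchmem f e).mp hes' with h1 | h1
            · rw [← heq, h1]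
            · have h2 := D.otherArc_spec (bin_tn_outdeg hbin hf1)
              have htfe : D.tail f = D.tail e := by rw [show e = D.otherArc f from h1, h2.1]
              have hfe : f ≠ e := by
                intro hh
                rw [hh] at h1 h2
                exact h2.2 h1.symm
              have hff : f = D.otherArc e := D.otherArc_eq hod htfe hfe
              rw [← heq]
              show D.chOf f = D.chOf e
              rw [chOf, chOf, hff, D.otherArc_invol hod, Finset.pair_comm]
        · -- top case : e tops the shape of m := otherArc e
          have hm : D.otherArc e ∉ S := hoS
          have hspec := D.otherArc_spec hod
          have hetop : e = D.otherArc (D.otherArc e) := (D.otherArc_invol hod).symm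
          refine ⟨D.rcOf (D.otherArc e), ⟨(hPmem _).mpr (Or.inl ⟨D.otherArc e, hm, rfl⟩),
            (hrcmem _ e).mpr (Or.inr (Or.inr hetop))⟩, ?_⟩
          rintro s' ⟨hs'P, hes'⟩
          rcases (hPmem s').mp hs'P with ⟨m', hm', heq⟩ | ⟨f, ⟨hf1, hf2, hf3⟩, heq⟩
          · rw [← heq] at hes'
            rcases (hrcmem m' e).mp hes' with h1 | h1 | h1
            · have h5 := hhead m' hm'
              rw [← hbot_spec m' hm', ← h1] at h5
              exact absurd h (D.not_treeNode_of_retic h5)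
            · exact absurd (by rw [← h1]; exact heS) hm'
            · have hsp' := D.otherArc_spec (hodt m' hm')
              have htme : D.tail m' = D.tail e := by
                rw [show e = D.otherArc m' from h1, hsp'.1]
              have hm'e : m' ≠ e := fun hh => hm' (by rw [hh]; exact heS)
              have hmm : m' = D.otherArc e := D.otherArc_eq hod htme hm'e
              rw [← heq, hmm]
          · rw [← heq] at hes'
            rcases (hchmem f e).mp hes' with h1 | h1
            · exact absurd (by rw [show e = f from h1] at hoS ⊢; exact hf3) hoS
            · have h2 := D.otherArc_spec (bin_tn_outdeg hbin hf1)
              have htfe : D.tail f = D.tail e := by rw [show e = D.otherArc f from h1, h2.1]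
              have hfe : f ≠ e := by
                intro hh
                rw [hh] at h1 h2
                exact h2.2 h1.symm
              have hff : f = D.otherArc e := D.otherArc_eq hod htfe hfe
              exact absurd (by rw [← hff]; exact hf2) hoS
      · -- mid case : e ∉ S
        refine ⟨D.rcOf e, ⟨(hPmem _).mpr (Or.inl ⟨e, heS, rfl⟩),
          (hrcmem e e).mpr (Or.inr (Or.inl rfl))⟩, ?_⟩
        rintro s' ⟨hs'P, hes'⟩
        rcases (hPmem s').mp hs'P with ⟨m', hm', heq⟩ | ⟨f, ⟨hf1, hf2, hf3⟩, heq⟩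
        · rw [← heq] at hes'
          rcases (hrcmem m' e).mp hes' with h1 | h1 | h1
          · have h5 := hhead m' hm'
            rw [← hbot_spec m' hm', ← h1] at h5
            exact absurd h (D.not_treeNode_of_retic h5)
          · rw [← heq, h1]
          · have hsp' := D.otherArc_spec (hodt m' hm')
            have htme : D.tail e = D.tail m' := by rw [show e = D.otherArc m' from h1, hsp'.1]
            have hem : e = m' := htail_inj e m' heS hm' htme
            rw [hem] at h1
            exact absurd h1.symm hsp'.2
        · rw [← heq] at hes'
          rcases (hchmem f e).mp hes' with h1 | h1
          · exact absurd (by rw [h1]; exact hf2) heS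
          · exact absurd (by rw [h1]; exact hf3) heS
    · -- reticulation tail : e is the bottom arc
      obtain ⟨m, hm, hmv, hmuniq⟩ := hretic_in (D.tail e) h
      have hbote : e = D.botArc m := D.botArc_eq (hhead m hm).2 hmv.symm
      refine ⟨D.rcOf m, ⟨(hPmem _).mpr (Or.inl ⟨m, hm, rfl⟩),
        (hrcmem m e).mpr (Or.inl hbote)⟩, ?_⟩
      rintro s' ⟨hs'P, hes'⟩
      rcases (hPmem s').mp hs'P with ⟨m', hm', heq⟩ | ⟨f, ⟨hf1, hf2, hf3⟩, heq⟩
      · rw [← heq] at hes'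
        rcases (hrcmem m' e).mp hes' with h1 | h1 | h1
        · have hte : D.tail e = D.head m' := by rw [show e = D.botArc m' from h1, hbot_spec m' hm']
          have hmm : m' = m := hmuniq m' hm' hte.symm
          rw [← heq, hmm]
        · have h5 := htail m' hm'
          rw [← h1] at h5
          exact absurd h5 (D.not_treeNode_of_retic h)
        · have hsp' := D.otherArc_spec (hodt m' hm')
          have h6 : D.tail e = D.tail m' := by rw [show e = D.otherArc m' from h1, hsp'.1]
          have h5 := htail m' hm'
          rw [← h6] at h5
          exact absurd h5 (D.not_treeNode_of_retic h)
      · rw [← heq] at hes'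
        rcases (hchmem f e).mp hes' with h1 | h1
        · have h5 := hf1
          rw [← h1] at h5
          exact absurd h5 (D.not_treeNode_of_retic h)
        · have h2 := D.otherArc_spec (bin_tn_outdeg hbin hf1)
          have h6 : D.tail e = D.tail f := by rw [show e = D.otherArc f from h1, h2.1]
          have h5 := hf1
          rw [← h6] at h5
          exact absurd h5 (D.not_treeNode_of_retic h)
  refine ⟨P, ⟨hshapes, hcov, hnoroot⟩, ?_⟩
  intro e
  constructor
  · rintro ⟨s, hsP, hmide⟩
    rcases (hPmem s).mp hsP with ⟨m, hm, heq⟩ | ⟨f, ⟨hf1, hf2, hf3⟩, heq⟩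
    · have h1 := hshape m hm
      rw [heq] at h1
      have hem : e = m := D.rc_mid_unique hnp h1 hmide
      rw [hem]
      exact hm
    · have hc3 := D.rc_card hmide
      have h2 := D.otherArc_spec (bin_tn_outdeg hbin hf1)
      have hc2 : s.card = 2 := by
        rw [← heq, chOf, Finset.card_insert_of_notMem
          (by simp only [Finset.mem_singleton]; exact fun hh => h2.2 hh.symm),
          Finset.card_singleton]
      omega
  · intro heS
    exact ⟨D.rcOf e, (hPmem _).mpr (Or.inl ⟨e, heS, rfl⟩), hshape e heS⟩

end MGraph

/-- In a binary network the number of cherry covers equals the number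
of support trees; moreover, if tree-based, deleting all middle arcs of the
reticulated cherry shapes of a cherry cover is a bijection onto support trees. -/
theorem stmt0 {V A : Type} [Fintype V] [Fintype A] [DecidableEq V] [DecidableEq A]
    (D : MGraph V A) (hbin : D.IsBinary) :
    {P : Finset (Finset A) | D.IsCherryCover P}.ncard
      = {S : Set A | D.IsSupportTree S}.ncard ∧
    (D.IsTreeBased →
      Set.BijOn
        (fun P : Finset (Finset A) =>
          {e : A | ¬ ∃ s ∈ P, D.IsRCShapeMid D.IsTreeNode D.IsRetic s e})
        {P : Finset (Finset A) | D.IsCherryCover P}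
        {S : Set A | D.IsSupportTree S}) := by
  classical
  have hbij : Set.BijOn
      (fun P : Finset (Finset A) =>
        {e : A | ¬ ∃ s ∈ P, D.IsRCShapeMid D.IsTreeNode D.IsRetic s e})
      {P : Finset (Finset A) | D.IsCherryCover P}
      {S : Set A | D.IsSupportTree S} := by
    refine ⟨fun P hP => D.cover_maps hbin hP, ?_, ?_⟩
    · intro P1 h1 P2 h2 heq
      have hm : ∀ e, D.MidIn P1 e ↔ D.MidIn P2 e := by
        intro e
        have h := Set.ext_iff.mp heq e
        exact not_iff_not.mp h
      exact Finset.Subset.antisymm (D.cover_subset hbin h1 h2 hm)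
        (D.cover_subset hbin h2 h1 fun e => (hm e).symm)
    · intro S hS
      obtain ⟨P, hP, hPS⟩ := D.support_cover hbin hS
      refine ⟨P, hP, ?_⟩
      ext e
      exact (not_iff_not.mpr (hPS e)).trans not_not
  refine ⟨?_, fun _ => hbij⟩
  rw [← hbij.image_eq]
  exact (Set.ncard_image_of_injOn hbij.injOn).symm
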